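/- For d ≥ 0, the function H_d(γ) = -log(1-|γ|²) - 2d·log|1-γ| + H_d(0), defined for γ in the open unit disk 𝔻 ⊂ ℂ, is nonnegative and vanishes exactly at γ = γ_d = -d/(1+d). -/

import Mathlib

/-- `H_d(0) = (1+2d)·log(1+2d) - 2(1+d)·log(1+d)`. -/
noncomputable def Hd0 (d : ℝ) : ℝ :=
  (1 + 2 * d) * Real.log (1 + 2 * d) - 2 * (1 + d) * Real.log (1 + d)

/-- `H_d(γ) = -log(1-|γ|²) - 2d·log|1-γ| + H_d(0)` for `γ` in the open unit disk. -/
noncomputable def Hd (d : ℝ) (γ : ℂ) : ℝ :=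
  -Real.log (1 - ‖γ‖ ^ 2) - 2 * d * Real.log (‖1 - γ‖) + Hd0 d

/-! Write `H_d(γ) = -(log u + d log v)`, where `u` and `v` are `1 - |γ|²` and `|1 - γ|²`
rescaled so that both equal `1` at `γ_d = -d/(1+d)`. Then `log x ≤ x - 1` gives
`H_d(γ) ≥ (1 + d) - (u + d v)`, and the right-hand side is the explicit quadratic
`(1+d)³/(1+2d)² · |γ - γ_d|²`. -/

open Real

lemma log_add_mul_log_le {u v d : ℝ} (hu : 0 < u) (hv : 0 < v) (hd : 0 ≤ d) :
    log u + d * log v ≤ u + d * v - (1 + d) := by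
  have := mul_le_mul_of_nonneg_left (log_le_sub_one_of_pos hv) hd
  linarith [log_le_sub_one_of_pos hu]

section

variable {d : ℝ} {γ : ℂ}

lemma one_sub_norm_sq_pos (hγ : ‖γ‖ < 1) : 0 < 1 - ‖γ‖ ^ 2 := by
  nlinarith [norm_nonneg γ]

lemma norm_one_sub_pos (hγ : ‖γ‖ < 1) : 0 < ‖1 - γ‖ := by
  refine norm_pos_iff.mpr (sub_ne_zero.mpr fun h => ?_)
  simp [← h] at hγ

lemma Hd_eq_neg_log_add_mul_log (hd : 0 ≤ d) (hγ : ‖γ‖ < 1) :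
    Hd d γ = -(log ((1 - ‖γ‖ ^ 2) * (1 + d) ^ 2 / (1 + 2 * d))
      + d * log (‖1 - γ‖ ^ 2 * (1 + d) ^ 2 / (1 + 2 * d) ^ 2)) := by
  have h₁ := one_sub_norm_sq_pos hγ
  have h₂ := norm_one_sub_pos hγ
  rw [Hd, Hd0, log_div (by positivity) (by positivity), log_div (by positivity) (by positivity),
    log_mul h₁.ne' (by positivity), log_mul (by positivity) (by positivity)]
  simp only [log_pow]
  push_cast
  ring

lemma one_add_sub_eq_mul_norm_sub_sq (hd : 0 ≤ d) (γ : ℂ) :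
    (1 + d) - ((1 - ‖γ‖ ^ 2) * (1 + d) ^ 2 / (1 + 2 * d)
      + d * (‖1 - γ‖ ^ 2 * (1 + d) ^ 2 / (1 + 2 * d) ^ 2))
      = (1 + d) ^ 3 / (1 + 2 * d) ^ 2 * ‖γ - ((-(d / (1 + d)) : ℝ) : ℂ)‖ ^ 2 := by
  simp only [Complex.sq_norm, Complex.normSq_apply, Complex.sub_re, Complex.sub_im,
    Complex.one_re, Complex.one_im, Complex.ofReal_re, Complex.ofReal_im]
  field_simp
  ring

lemma mul_norm_sub_sq_le_Hd (hd : 0 ≤ d) (hγ : ‖γ‖ < 1) :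
    (1 + d) ^ 3 / (1 + 2 * d) ^ 2 * ‖γ - ((-(d / (1 + d)) : ℝ) : ℂ)‖ ^ 2 ≤ Hd d γ := by
  have h₁ := one_sub_norm_sq_pos hγ
  have h₂ := norm_one_sub_pos hγ
  rw [Hd_eq_neg_log_add_mul_log hd hγ, ← one_add_sub_eq_mul_norm_sub_sq hd γ]
  linarith [log_add_mul_log_le (by positivity) (by positivity) hd
    (u := (1 - ‖γ‖ ^ 2) * (1 + d) ^ 2 / (1 + 2 * d))
    (v := ‖1 - γ‖ ^ 2 * (1 + d) ^ 2 / (1 + 2 * d) ^ 2)]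

lemma Hd_neg_div_one_add_eq_zero (hd : 0 ≤ d) : Hd d ((-(d / (1 + d)) : ℝ) : ℂ) = 0 := by
  have hγ : ‖(((-(d / (1 + d)) : ℝ) : ℂ))‖ < 1 := by
    rw [Complex.norm_real, norm_neg, Real.norm_of_nonneg (by positivity),
      div_lt_one (by positivity)]
    linarith
  rw [Hd_eq_neg_log_add_mul_log hd hγ]
  have hu : (1 - ‖(((-(d / (1 + d)) : ℝ) : ℂ))‖ ^ 2) * (1 + d) ^ 2 / (1 + 2 * d) = 1 := by
    rw [Complex.norm_real, Real.norm_eq_abs, sq_abs]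
    field_simp
    ring
  have hv : ‖1 - (((-(d / (1 + d)) : ℝ) : ℂ))‖ ^ 2 * (1 + d) ^ 2 / (1 + 2 * d) ^ 2 = 1 := by
    rw [← Complex.ofReal_one, ← Complex.ofReal_sub, Complex.norm_real, Real.norm_eq_abs, sq_abs]
    field_simp
    ring
  rw [hu, hv, log_one, mul_zero, add_zero, neg_zero]

end

theorem Hd_nonneg_vanishes (d : ℝ) (hd : 0 ≤ d) (γ : ℂ) (hγ : ‖γ‖ < 1) :
    0 ≤ Hd d γ ∧ (Hd d γ = 0 ↔ γ = ((-(d / (1 + d)) : ℝ) : ℂ)) := by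
  have hbound := mul_norm_sub_sq_le_Hd hd hγ
  have hc : 0 < (1 + d) ^ 3 / (1 + 2 * d) ^ 2 := by positivity
  refine ⟨le_trans (by positivity) hbound, fun h => ?_,
    fun h => h ▸ Hd_neg_div_one_add_eq_zero hd⟩
  have hsq : ‖γ - ((-(d / (1 + d)) : ℝ) : ℂ)‖ ^ 2 = 0 :=
    le_antisymm (nonpos_of_mul_nonpos_right (h ▸ hbound) hc) (sq_nonneg _)
  exact sub_eq_zero.mp (norm_eq_zero.mp (pow_eq_zero_iff two_ne_zero |>.mp hsq))
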